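/- Let d ≥ 2, let τ = ψ ψᴴ be the maximally entangled state on the bipartite space indexed by Fin d × Fin d, where ψ (i,k) = (1/√d) if i = k and 0 otherwise, and let ρ be any density matrix on the same space. If the trace norm of ρ − τ is at most ε with ε ≤ 1/10, then μ(ρ) ≥ 1 − 9ε. -/

import Mathlib

open Matrix
open scoped Kronecker ComplexOrder

noncomputable section

/-- Partial trace over the second factor: `(margA ρ) i j = Σ_k ρ (i,k) (j,k)`. -/
def margA {α β : Type*} [Fintype β] (ρ : Matrix (α × β) (α × β) ℂ) : Matrix α α ℂ :=
  Matrix.of fun i j => ∑ k, ρ (i, k) (j, k)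

/-- Partial trace over the first factor: `(margB ρ) k l = Σ_i ρ (i,k) (i,l)`. -/
def margB {α β : Type*} [Fintype α] (ρ : Matrix (α × β) (α × β) ℂ) : Matrix β β ℂ :=
  Matrix.of fun k l => ∑ i, ρ (i, k) (i, l)

/-- The maximal correlation of a bipartite state: the supremum of `|tr(ρ (X ⊗ Yᴴ))|` over
`X`, `Y` with `tr(ρ_A X) = tr(ρ_B Y) = 0` and `tr(ρ_A X Xᴴ) = tr(ρ_B Y Yᴴ) = 1`. -/
def mu {α β : Type*} [Fintype α] [Fintype β] (ρ : Matrix (α × β) (α × β) ℂ) : ℝ :=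
  sSup { r : ℝ | ∃ (X : Matrix α α ℂ) (Y : Matrix β β ℂ),
    (margA ρ * X).trace = 0 ∧ (margB ρ * Y).trace = 0 ∧
    (margA ρ * X * Xᴴ).trace = 1 ∧ (margB ρ * Y * Yᴴ).trace = 1 ∧
    r = ‖(ρ * (X ⊗ₖ Yᴴ)).trace‖ }

/-- The list of singular values of a matrix (square roots of the eigenvalues of `MᴴM`),
in decreasing order. -/
def svalsDesc {𝕜 : Type*} [RCLike 𝕜] {m n : Type*} [Fintype m] [Fintype n] [DecidableEq n]
    (M : Matrix m n 𝕜) : List ℝ :=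
  (Multiset.sort (Finset.univ.val.map fun i =>
    Real.sqrt ((Matrix.posSemidef_conjTranspose_mul_self M).isHermitian.eigenvalues i)) (· ≤ ·)).reverse

set_option linter.unusedSectionVars false

section Auxiliary

/-- Cauchy–Schwarz for finite sums of complex numbers. -/
lemma aux_cs_sum {ι : Type*} [Fintype ι] (u v : ι → ℂ) :
    ‖∑ i, (starRingEnd ℂ) (u i) * v i‖ ≤
      Real.sqrt (∑ i, Complex.normSq (u i)) * Real.sqrt (∑ i, Complex.normSq (v i)) := by
  let u' : EuclideanSpace ℂ ι := WithLp.toLp 2 u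
  let v' : EuclideanSpace ℂ ι := WithLp.toLp 2 v
  have h1 : (inner ℂ u' v' : ℂ) = ∑ i, (starRingEnd ℂ) (u i) * v i := by
    simp [PiLp.inner_apply, RCLike.inner_apply, u', v', mul_comm]
  have h2 : ‖u'‖ = Real.sqrt (∑ i, Complex.normSq (u i)) := by
    rw [EuclideanSpace.norm_eq]
    congr 1
    refine Finset.sum_congr rfl fun i _ => ?_
    simp [u', v', Complex.sq_norm]
  have h3 : ‖v'‖ = Real.sqrt (∑ i, Complex.normSq (v i)) := by
    rw [EuclideanSpace.norm_eq]
    congr 1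
    refine Finset.sum_congr rfl fun i _ => ?_
    simp [u', v', Complex.sq_norm]
  calc ‖∑ i, (starRingEnd ℂ) (u i) * v i‖ = ‖(inner ℂ u' v' : ℂ)‖ := by
        rw [h1]
    _ ≤ ‖u'‖ * ‖v'‖ := norm_inner_le_norm _ _
    _ = _ := by rw [h2, h3]

/-- Frobenius Cauchy-Schwarz. -/
lemma aux_fro_cs {m : Type*} [Fintype m] (P Q : Matrix m m ℂ) :
    ‖(Pᴴ * Q).trace‖ ≤
      Real.sqrt ((Pᴴ * P).trace.re) * Real.sqrt ((Qᴴ * Q).trace.re) := by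
  have key : ∀ R S : Matrix m m ℂ,
      (Rᴴ * S).trace = ∑ x : m × m, (starRingEnd ℂ) (R x.2 x.1) * S x.2 x.1 := by
    intro R S
    rw [Fintype.sum_prod_type]
    simp [Matrix.trace, Matrix.mul_apply, Matrix.conjTranspose_apply, Matrix.diag]
  have hre : ∀ R : Matrix m m ℂ,
      (Rᴴ * R).trace.re = ∑ x : m × m, Complex.normSq (R x.2 x.1) := by
    intro R
    rw [key R R, Complex.re_sum]
    refine Finset.sum_congr rfl fun x _ => ?_
    rw [mul_comm, Complex.mul_conj]
    simp
  rw [key, hre, hre]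
  exact aux_cs_sum _ _

/-- Trace Hölder-type bound: `|tr(Δ M)| ≤` sum of singular values of `Δ`, for `M` with
`M * Mᴴ = 1`. -/
lemma aux_trace_mul_le_sum_sqrt_eig {m : Type*} [Fintype m] [DecidableEq m]
    (Δ M : Matrix m m ℂ) (hM : M * Mᴴ = 1) :
    ‖(Δ * M).trace‖ ≤
      ∑ i, Real.sqrt ((Matrix.posSemidef_conjTranspose_mul_self Δ).isHermitian.eigenvalues i) := by
  set hS := (Matrix.posSemidef_conjTranspose_mul_self Δ).isHermitian with hhS
  set V : Matrix m m ℂ := (hS.eigenvectorUnitary : Matrix m m ℂ) with hV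
  have hV1 : Vᴴ * V = 1 := by
    have := hS.eigenvectorUnitary.2
    rw [Matrix.mem_unitaryGroup_iff'] at this
    simpa [Matrix.star_eq_conjTranspose] using this
  have hV2 : V * Vᴴ = 1 := by
    have := hS.eigenvectorUnitary.2
    rw [Matrix.mem_unitaryGroup_iff] at this
    simpa [Matrix.star_eq_conjTranspose] using this
  have hdiag : Vᴴ * (Δᴴ * Δ) * V = Matrix.diagonal (RCLike.ofReal ∘ hS.eigenvalues) := by
    have := Matrix.IsHermitian.conjStarAlgAut_star_eigenvectorUnitary hS
    simpa [Unitary.conjStarAlgAut_apply, Matrix.star_eq_conjTranspose] using this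
  set A : Matrix m m ℂ := Vᴴ * M with hA
  set B : Matrix m m ℂ := Δ * V with hB
  have htr : (Δ * M).trace = (A * B).trace := by
    have : A * B = Vᴴ * (M * Δ) * V := by
      rw [hA, hB, Matrix.mul_assoc, Matrix.mul_assoc, Matrix.mul_assoc]
    rw [this, Matrix.trace_mul_cycle, ← Matrix.mul_assoc, hV2, Matrix.one_mul,
      Matrix.trace_mul_comm]
  have hAA : A * Aᴴ = 1 := by
    rw [hA, Matrix.conjTranspose_mul, Matrix.conjTranspose_conjTranspose]
    calc Vᴴ * M * (Mᴴ * V) = Vᴴ * (M * Mᴴ) * V := by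
          rw [Matrix.mul_assoc, Matrix.mul_assoc, Matrix.mul_assoc]
      _ = 1 := by rw [hM, Matrix.mul_one, hV1]
  have hBB : Bᴴ * B = Matrix.diagonal (RCLike.ofReal ∘ hS.eigenvalues) := by
    rw [hB, Matrix.conjTranspose_mul]
    calc Vᴴ * Δᴴ * (Δ * V) = Vᴴ * (Δᴴ * Δ) * V := by
          rw [Matrix.mul_assoc, Matrix.mul_assoc, Matrix.mul_assoc]
      _ = _ := hdiag
  rw [htr]
  have hexp : (A * B).trace = ∑ i, ∑ j, A i j * B j i := by
    simp [Matrix.trace, Matrix.mul_apply, Matrix.diag]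
  rw [hexp]
  calc ‖∑ i, ∑ j, A i j * B j i‖
      ≤ ∑ i, ‖∑ j, A i j * B j i‖ := by
        exact norm_sum_le _ _
    _ ≤ ∑ i, Real.sqrt (hS.eigenvalues i) := by
        refine Finset.sum_le_sum fun i _ => ?_
        have h1 : (∑ j, A i j * B j i)
            = ∑ j, (starRingEnd ℂ) ((starRingEnd ℂ) (A i j)) * B j i := by
          simp
        rw [h1]
        refine le_trans (aux_cs_sum (fun j => (starRingEnd ℂ) (A i j)) (fun j => B j i)) ?_
        have e1 : ∑ j, Complex.normSq ((starRingEnd ℂ) (A i j)) = 1 := by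
          have : ((1 : Matrix m m ℂ)) i i = (A * Aᴴ) i i := by rw [hAA]
          rw [Matrix.one_apply_eq] at this
          have h2 : (A * Aᴴ) i i = ((∑ j, Complex.normSq (A i j) : ℝ) : ℂ) := by
            push_cast
            simp [Matrix.mul_apply, Matrix.conjTranspose_apply, Complex.mul_conj]
          rw [h2] at this
          have h3 : (∑ j, Complex.normSq (A i j) : ℝ) = 1 := by
            exact_mod_cast this.symm
          simpa [Complex.normSq_conj] using h3
        have e2 : ∑ j, Complex.normSq (B j i) = hS.eigenvalues i := by
          have : (Bᴴ * B) i i = Matrix.diagonal (RCLike.ofReal ∘ hS.eigenvalues) i i := by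
            rw [hBB]
          rw [Matrix.diagonal_apply_eq] at this
          have h2 : (Bᴴ * B) i i = ((∑ j, Complex.normSq (B j i) : ℝ) : ℂ) := by
            push_cast
            simp [Matrix.mul_apply, Matrix.conjTranspose_apply, mul_comm, Complex.mul_conj]
          rw [h2] at this
          rw [Function.comp_apply] at this
          have := congrArg Complex.re this
          simpa using this
        rw [e1, e2, Real.sqrt_one, one_mul]

lemma aux_svalsDesc_sum {𝕜 : Type*} [RCLike 𝕜] {m n : Type*} [Fintype m] [Fintype n]
    [DecidableEq n] (M : Matrix m n 𝕜) :
    (svalsDesc M).sum = ∑ i, Real.sqrt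
      ((Matrix.posSemidef_conjTranspose_mul_self M).isHermitian.eigenvalues i) := by
  rw [svalsDesc, List.sum_reverse]
  rw [← Multiset.sum_coe, Multiset.sort_eq]
  rfl

lemma aux_svalsDesc_sum_nonneg {𝕜 : Type*} [RCLike 𝕜] {m n : Type*} [Fintype m] [Fintype n]
    [DecidableEq n] (M : Matrix m n 𝕜) : 0 ≤ (svalsDesc M).sum := by
  rw [aux_svalsDesc_sum]
  exact Finset.sum_nonneg fun i _ => Real.sqrt_nonneg _

variable {α β : Type*} [Fintype α] [Fintype β] [DecidableEq α] [DecidableEq β]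

lemma aux_trace_mul_kron_one (ρ : Matrix (α × β) (α × β) ℂ) (M : Matrix α α ℂ) :
    (ρ * (M ⊗ₖ (1 : Matrix β β ℂ))).trace = (margA ρ * M).trace := by
  have L : (ρ * (M ⊗ₖ (1 : Matrix β β ℂ))).trace
      = ∑ i : α, ∑ k : β, ∑ j : α, ρ (i, k) (j, k) * M j i := by
    simp only [Matrix.trace, Matrix.diag_apply, Matrix.mul_apply, Matrix.kroneckerMap_apply,
      Matrix.one_apply, Fintype.sum_prod_type, mul_ite, mul_one, mul_zero,
      Finset.sum_ite_eq', Finset.mem_univ, if_true]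
  have R : (margA ρ * M).trace = ∑ i : α, ∑ j : α, ∑ k : β, ρ (i, k) (j, k) * M j i := by
    simp only [Matrix.trace, Matrix.diag_apply, Matrix.mul_apply, margA, Matrix.of_apply,
      Finset.sum_mul]
  rw [L, R]
  exact Finset.sum_congr rfl fun i _ => Finset.sum_comm

lemma aux_trace_mul_one_kron (ρ : Matrix (α × β) (α × β) ℂ) (N : Matrix β β ℂ) :
    (ρ * ((1 : Matrix α α ℂ) ⊗ₖ N)).trace = (margB ρ * N).trace := by
  have L : (ρ * ((1 : Matrix α α ℂ) ⊗ₖ N)).trace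
      = ∑ i : α, ∑ k : β, ∑ l : β, ρ (i, k) (i, l) * N l k := by
    simp only [Matrix.trace, Matrix.diag_apply, Matrix.mul_apply, Matrix.kroneckerMap_apply,
      Matrix.one_apply, Fintype.sum_prod_type, ite_mul, one_mul, zero_mul,
      mul_ite, mul_zero, mul_one]
    refine Finset.sum_congr rfl fun i _ => Finset.sum_congr rfl fun k _ => ?_
    rw [Finset.sum_comm]
    simp [Finset.sum_ite_eq', mul_comm]
  have R : (margB ρ * N).trace = ∑ k : β, ∑ l : β, ∑ i : α, ρ (i, k) (i, l) * N l k := by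
    simp only [Matrix.trace, Matrix.diag_apply, Matrix.mul_apply, margB, Matrix.of_apply,
      Finset.sum_mul]
  rw [L, R, Finset.sum_comm]
  exact Finset.sum_congr rfl fun k _ => Finset.sum_comm

lemma aux_margA_trace (ρ : Matrix (α × β) (α × β) ℂ) : (margA ρ).trace = ρ.trace := by
  simp [Matrix.trace, margA, Fintype.sum_prod_type, Matrix.diag]

lemma aux_margB_trace (ρ : Matrix (α × β) (α × β) ℂ) : (margB ρ).trace = ρ.trace := by
  rw [Matrix.trace, Matrix.trace, Fintype.sum_prod_type, Finset.sum_comm]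
  simp [margB, Matrix.diag]

lemma aux_margA_herm {ρ : Matrix (α × β) (α × β) ℂ} (h : ρ.IsHermitian) :
    (margA ρ).IsHermitian := by
  ext i j
  simp only [Matrix.conjTranspose_apply, margA, Matrix.of_apply, star_sum]
  exact Finset.sum_congr rfl fun k _ => by rw [← Matrix.conjTranspose_apply ρ, h]

lemma aux_margB_herm {ρ : Matrix (α × β) (α × β) ℂ} (h : ρ.IsHermitian) :
    (margB ρ).IsHermitian := by
  ext k l
  simp only [Matrix.conjTranspose_apply, margB, Matrix.of_apply, star_sum]
  exact Finset.sum_congr rfl fun i _ => by rw [← Matrix.conjTranspose_apply ρ, h]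

lemma aux_kron_conjTranspose (A : Matrix α α ℂ) (B : Matrix β β ℂ) :
    (A ⊗ₖ B)ᴴ = Aᴴ ⊗ₖ Bᴴ := by
  ext x y
  simp [Matrix.conjTranspose_apply, Matrix.kroneckerMap_apply, mul_comm]

lemma aux_sub_kronecker (A B : Matrix α α ℂ) (C : Matrix β β ℂ) :
    (A - B) ⊗ₖ C = A ⊗ₖ C - B ⊗ₖ C := by
  ext x y
  simp [Matrix.kroneckerMap_apply, sub_mul]

lemma aux_kronecker_sub (A : Matrix α α ℂ) (B C : Matrix β β ℂ) :
    A ⊗ₖ (B - C) = A ⊗ₖ B - A ⊗ₖ C := by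
  ext x y
  simp [Matrix.kroneckerMap_apply, mul_sub]

/-- For a Hermitian `A`, `tr(A Xᴴ) = conj (tr(A X))`. -/
lemma aux_trace_mul_conjTranspose {m : Type*} [Fintype m] {A : Matrix m m ℂ}
    (hA : A.IsHermitian) (X : Matrix m m ℂ) :
    (A * Xᴴ).trace = (starRingEnd ℂ) ((A * X).trace) := by
  have h1 : A * Xᴴ = (X * A)ᴴ := by
    rw [Matrix.conjTranspose_mul, hA.eq]
  rw [h1, Matrix.trace_conjTranspose, Matrix.trace_mul_comm]
  rfl

/-- Adjusting an observable to satisfy the exact constraints. -/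
lemma aux_adjust {m : Type*} [Fintype m] [DecidableEq m] (A : Matrix m m ℂ)
    (hA : A.IsHermitian) (hAtr : A.trace = 1) (X₀ : Matrix m m ℂ) (hX₀ : X₀ * X₀ᴴ = 1)
    (c : ℂ) (hc : (A * X₀).trace = c) (a : ℝ)
    (ha : (a : ℂ) ^ 2 * (1 - (Complex.normSq c : ℂ)) = 1) :
    (A * ((a : ℂ) • (X₀ - c • 1))).trace = 0 ∧
    (A * ((a : ℂ) • (X₀ - c • 1)) * ((a : ℂ) • (X₀ - c • 1))ᴴ).trace = 1 := by
  constructor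
  · have h1 : A * ((a : ℂ) • (X₀ - c • 1)) = (a : ℂ) • (A * X₀ - c • A) := by
      rw [Matrix.mul_smul, Matrix.mul_sub, Matrix.mul_smul, Matrix.mul_one]
    rw [h1, Matrix.trace_smul, Matrix.trace_sub, Matrix.trace_smul, hAtr, hc]
    simp
  · have hconj : ((a : ℂ) • (X₀ - c • 1))ᴴ
        = (a : ℂ) • (X₀ᴴ - (starRingEnd ℂ) c • 1) := by
      rw [Matrix.conjTranspose_smul, Matrix.conjTranspose_sub, Matrix.conjTranspose_smul,
        Matrix.conjTranspose_one]
      congr 1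
      simp [Complex.star_def, Complex.conj_ofReal]
    rw [hconj]
    have hexp : A * ((a : ℂ) • (X₀ - c • 1)) * ((a : ℂ) • (X₀ᴴ - (starRingEnd ℂ) c • 1))
        = ((a : ℂ) * (a : ℂ)) • (A * (X₀ * X₀ᴴ) - (starRingEnd ℂ) c • (A * X₀)
            - c • (A * X₀ᴴ) + (c * (starRingEnd ℂ) c) • A) := by
      simp only [Matrix.mul_smul, Matrix.smul_mul, Matrix.mul_sub, Matrix.sub_mul,
        Matrix.mul_one, Matrix.one_mul, smul_sub, sub_smul, smul_smul, Matrix.mul_assoc]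
      module
    rw [hexp, Matrix.trace_smul]
    rw [Matrix.trace_add, Matrix.trace_sub, Matrix.trace_sub, Matrix.trace_smul,
      Matrix.trace_smul, Matrix.trace_smul, hX₀, Matrix.mul_one, hAtr, hc,
      aux_trace_mul_conjTranspose hA, hc]
    have hmc : c * (starRingEnd ℂ) c = (Complex.normSq c : ℂ) := Complex.mul_conj c
    have hmc' : (starRingEnd ℂ) c * c = (Complex.normSq c : ℂ) := by rw [mul_comm]; exact hmc
    simp only [smul_eq_mul, mul_one]
    rw [hmc, hmc']
    linear_combination ha

lemma aux_trace_tau_mul {d : ℕ} (hd : 2 ≤ d) (K : Matrix (Fin d × Fin d) (Fin d × Fin d) ℂ) :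
    (((Matrix.of fun x y =>
        (if x.1 = x.2 then (1 / Real.sqrt d : ℂ) else 0) *
          star (if y.1 = y.2 then (1 / Real.sqrt d : ℂ) else 0) :
        Matrix (Fin d × Fin d) (Fin d × Fin d) ℂ)) * K).trace
      = (1 / (d : ℂ)) * ∑ i, ∑ j, K (j, j) (i, i) := by
  have hs : ((Real.sqrt d : ℂ)) * (Real.sqrt d : ℂ) = (d : ℂ) := by
    have h0 : (Real.sqrt d * Real.sqrt d : ℝ) = (d : ℝ) := Real.mul_self_sqrt (Nat.cast_nonneg d)
    exact_mod_cast congrArg Complex.ofReal h0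
  have htau : ∀ x y : Fin d × Fin d,
      ((if x.1 = x.2 then (1 / Real.sqrt d : ℂ) else 0) *
        star (if y.1 = y.2 then (1 / Real.sqrt d : ℂ) else 0))
      = (if x.1 = x.2 then (1:ℂ) else 0) * (if y.1 = y.2 then (1:ℂ) else 0) * (1 / (d:ℂ)) := by
    intro x y
    by_cases h1 : x.1 = x.2 <;> by_cases h2 : y.1 = y.2 <;>
      simp [h1, h2, Complex.star_def, map_div₀, Complex.conj_ofReal]
    rw [← mul_inv, hs]
  simp only [Matrix.trace, Matrix.diag_apply, Matrix.mul_apply, Matrix.of_apply, htau]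
  simp only [Fintype.sum_prod_type, ite_mul, one_mul, zero_mul, mul_ite, mul_zero, mul_one]
  rw [Finset.mul_sum]
  refine Finset.sum_congr rfl fun i _ => ?_
  rw [Finset.mul_sum]
  simp [Finset.sum_ite_eq]
example : True := trivial

lemma aux_zeta_facts (hd : 2 ≤ d) :
    ∃ ζ : ℂ, ζ ^ d = 1 ∧ ζ ≠ 1 ∧ ζ * star ζ = 1 := by
  refine ⟨Complex.exp (2 * Real.pi * Complex.I / d), ?_, ?_, ?_⟩
  · rw [← Complex.exp_nat_mul]
    have hd0 : (d : ℂ) ≠ 0 := Nat.cast_ne_zero.mpr (by omega)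
    rw [show (d : ℂ) * (2 * Real.pi * Complex.I / d) = 2 * Real.pi * Complex.I by
      field_simp]
    exact Complex.exp_two_pi_mul_I
  · intro h
    rw [Complex.exp_eq_one_iff] at h
    obtain ⟨n, hn⟩ := h
    have hd0 : (d : ℂ) ≠ 0 := Nat.cast_ne_zero.mpr (by omega)
    have h2 : (2 * Real.pi * Complex.I : ℂ) ≠ 0 := Complex.two_pi_I_ne_zero
    have : (1 : ℂ) = n * d := by
      field_simp at hn
      refine mul_left_cancel₀ h2 ?_
      linear_combination (2 * Real.pi * Complex.I) * hn
    have : ((1 : ℤ) : ℂ) = ((n * d : ℤ) : ℂ) := by push_cast; exact this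
    have h1 : (1 : ℤ) = n * d := by exact_mod_cast this
    have : (d : ℤ) ∣ 1 := ⟨n, h1.trans (mul_comm n d)⟩
    have := Int.le_of_dvd one_pos this
    omega
  · rw [Complex.star_def, ← Complex.exp_conj, ← Complex.exp_add]
    rw [show (2 * Real.pi * Complex.I / d) + (starRingEnd ℂ) (2 * Real.pi * Complex.I / d) = 0 by
      simp [map_div₀, Complex.conj_I, Complex.conj_ofNat]; ring]
    exact Complex.exp_zero

lemma aux_X0_facts (hd : 2 ≤ d) :
    ∃ X₀ : Matrix (Fin d) (Fin d) ℂ, X₀.trace = 0 ∧ X₀ * X₀ᴴ = 1 ∧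
      (∀ j, Complex.normSq (X₀ j j) = 1) ∧ (∀ i j, i ≠ j → X₀ i j = 0) := by
  obtain ⟨ζ, hζd, hζne, hζu⟩ := aux_zeta_facts hd
  refine ⟨Matrix.diagonal (fun j : Fin d => ζ ^ (j : ℕ)), ?_, ?_, ?_, ?_⟩
  · rw [Matrix.trace_diagonal, Fin.sum_univ_eq_sum_range (fun j => ζ ^ j), geom_sum_eq hζne,
      hζd, sub_self, zero_div]
  · rw [Matrix.diagonal_conjTranspose, Matrix.diagonal_mul_diagonal]
    convert Matrix.diagonal_one with j
    have : ζ ^ (j:ℕ) * star (ζ ^ (j:ℕ)) = (ζ * star ζ) ^ (j:ℕ) := by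
      rw [star_pow, mul_pow]
    simp only [Pi.star_apply]
    rw [this, hζu, one_pow]
  · intro j
    have h : Complex.normSq ζ = 1 := by
      have := hζu
      rw [Complex.star_def, Complex.mul_conj] at this
      exact_mod_cast this
    simp [Matrix.diagonal_apply_eq, map_pow Complex.normSq, h]
  · intro i j hij
    exact Matrix.diagonal_apply_ne _ hij


open scoped MatrixOrder in
lemma aux_mem_le_one {α β : Type*} [Fintype α] [Fintype β] [DecidableEq α] [DecidableEq β]
    {ρ : Matrix (α × β) (α × β) ℂ} (hρ : ρ.PosSemidef) :
    ∀ r ∈ { r : ℝ | ∃ (X : Matrix α α ℂ) (Y : Matrix β β ℂ),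
      (margA ρ * X).trace = 0 ∧ (margB ρ * Y).trace = 0 ∧
      (margA ρ * X * Xᴴ).trace = 1 ∧ (margB ρ * Y * Yᴴ).trace = 1 ∧
      r = ‖(ρ * (X ⊗ₖ Yᴴ)).trace‖ }, r ≤ 1 := by
  rintro r ⟨X, Y, -, -, h3, h4, rfl⟩
  set C := CFC.sqrt ρ with hCdef
  have hCC : C * C = ρ := CFC.sqrt_mul_sqrt_self ρ hρ.nonneg
  have hCh : Cᴴ = C := (CFC.sqrt_nonneg ρ).posSemidef.isHermitian
  set P : Matrix (α × β) (α × β) ℂ := (Xᴴ ⊗ₖ (1 : Matrix β β ℂ)) * C with hP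
  set Q : Matrix (α × β) (α × β) ℂ := ((1 : Matrix α α ℂ) ⊗ₖ Yᴴ) * C with hQ
  have hPH : Pᴴ = C * (X ⊗ₖ (1 : Matrix β β ℂ)) := by
    rw [hP, Matrix.conjTranspose_mul, hCh, aux_kron_conjTranspose,
      Matrix.conjTranspose_conjTranspose, Matrix.conjTranspose_one]
  have key1 : (Pᴴ * Q).trace = (ρ * (X ⊗ₖ Yᴴ)).trace := by
    have hmid : (X ⊗ₖ (1 : Matrix β β ℂ)) * ((1 : Matrix α α ℂ) ⊗ₖ Yᴴ) = X ⊗ₖ Yᴴ := by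
      rw [← Matrix.mul_kronecker_mul, Matrix.mul_one, Matrix.one_mul]
    rw [hPH, hQ, Matrix.mul_assoc, ← Matrix.mul_assoc (X ⊗ₖ (1 : Matrix β β ℂ)), hmid,
      ← Matrix.mul_assoc, Matrix.trace_mul_cycle, hCC]
  have key2 : (Pᴴ * P).trace = 1 := by
    have hmid : (X ⊗ₖ (1 : Matrix β β ℂ)) * (Xᴴ ⊗ₖ (1 : Matrix β β ℂ))
        = (X * Xᴴ) ⊗ₖ (1 : Matrix β β ℂ) := by
      rw [← Matrix.mul_kronecker_mul, Matrix.mul_one]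
    rw [hPH, hP, Matrix.mul_assoc, ← Matrix.mul_assoc (X ⊗ₖ (1 : Matrix β β ℂ)), hmid,
      ← Matrix.mul_assoc, Matrix.trace_mul_cycle, hCC,
      aux_trace_mul_kron_one, ← Matrix.mul_assoc, h3]
  have key3 : (Qᴴ * Q).trace = 1 := by
    have hQH : Qᴴ = C * ((1 : Matrix α α ℂ) ⊗ₖ Y) := by
      rw [hQ, Matrix.conjTranspose_mul, hCh, aux_kron_conjTranspose,
        Matrix.conjTranspose_conjTranspose, Matrix.conjTranspose_one]
    have hmid : ((1 : Matrix α α ℂ) ⊗ₖ Y) * ((1 : Matrix α α ℂ) ⊗ₖ Yᴴ)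
        = (1 : Matrix α α ℂ) ⊗ₖ (Y * Yᴴ) := by
      rw [← Matrix.mul_kronecker_mul, Matrix.mul_one]
    rw [hQH, hQ, Matrix.mul_assoc, ← Matrix.mul_assoc ((1 : Matrix α α ℂ) ⊗ₖ Y), hmid,
      ← Matrix.mul_assoc, Matrix.trace_mul_cycle, hCC,
      aux_trace_mul_one_kron, ← Matrix.mul_assoc, h4]
  calc ‖(ρ * (X ⊗ₖ Yᴴ)).trace‖ = ‖(Pᴴ * Q).trace‖ := by rw [key1]
    _ ≤ Real.sqrt ((Pᴴ * P).trace.re) * Real.sqrt ((Qᴴ * Q).trace.re) := aux_fro_cs P Q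
    _ = 1 := by rw [key2, key3]; simp

end Auxiliary

set_option maxHeartbeats 2000000 in
/-- Continuity of maximal correlation at a maximally entangled state: if `ρ` is `ε`-close
(in trace norm, i.e. the sum of the singular values of the difference) to the maximally
entangled state with `ε ≤ 1/10`, then `μ(ρ) ≥ 1 - 9ε`. -/
theorem mu_ge_of_close_to_max_entangled {d : ℕ} (hd : 2 ≤ d)
    (ρ : Matrix (Fin d × Fin d) (Fin d × Fin d) ℂ)
    (hρ : ρ.PosSemidef) (htr : ρ.trace = 1) (ε : ℝ) (hε : ε ≤ 1 / 10)
    (hclose : (svalsDesc (ρ - Matrix.of fun x y =>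
        (if x.1 = x.2 then (1 / Real.sqrt d : ℂ) else 0) *
          star (if y.1 = y.2 then (1 / Real.sqrt d : ℂ) else 0))).sum ≤ ε) :
    1 - 9 * ε ≤ mu ρ := by
  classical
  set τ : Matrix (Fin d × Fin d) (Fin d × Fin d) ℂ := Matrix.of fun x y =>
      (if x.1 = x.2 then (1 / Real.sqrt d : ℂ) else 0) *
        star (if y.1 = y.2 then (1 / Real.sqrt d : ℂ) else 0) with hτdef
  set Δ : Matrix (Fin d × Fin d) (Fin d × Fin d) ℂ := ρ - τ with hΔdef
  have hεnn : 0 ≤ ε := le_trans (aux_svalsDesc_sum_nonneg _) hclose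
  have hΔbound : ∀ K : Matrix (Fin d × Fin d) (Fin d × Fin d) ℂ, K * Kᴴ = 1 →
      ‖(Δ * K).trace‖ ≤ ε := by
    intro K hK
    refine le_trans (aux_trace_mul_le_sum_sqrt_eig Δ K hK) ?_
    rw [← aux_svalsDesc_sum]
    exact hclose
  have hρsplit : ∀ K : Matrix (Fin d × Fin d) (Fin d × Fin d) ℂ,
      (ρ * K).trace = (τ * K).trace + (Δ * K).trace := by
    intro K
    rw [hΔdef, Matrix.sub_mul, Matrix.trace_sub]
    ring
  obtain ⟨X₀, hX₀tr, hX₀u, hX₀diag, hX₀off⟩ := aux_X0_facts hd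
  have hd0 : (d : ℂ) ≠ 0 := Nat.cast_ne_zero.mpr (by omega)
  -- τ traces
  have hτ1 : (τ * (X₀ ⊗ₖ (1 : Matrix (Fin d) (Fin d) ℂ))).trace = 0 := by
    rw [hτdef, aux_trace_tau_mul hd]
    have h : ∑ i, ∑ j, (X₀ ⊗ₖ (1 : Matrix (Fin d) (Fin d) ℂ)) (j, j) (i, i) = X₀.trace := by
      simp only [Matrix.kroneckerMap_apply, Matrix.one_apply, mul_ite, mul_one, mul_zero]
      simp [Finset.sum_ite_eq, Matrix.trace, Matrix.diag]
    rw [h, hX₀tr, mul_zero]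
  have hτ2 : (τ * ((1 : Matrix (Fin d) (Fin d) ℂ) ⊗ₖ X₀)).trace = 0 := by
    rw [hτdef, aux_trace_tau_mul hd]
    have h : ∑ i, ∑ j, ((1 : Matrix (Fin d) (Fin d) ℂ) ⊗ₖ X₀) (j, j) (i, i) = X₀.trace := by
      simp only [Matrix.kroneckerMap_apply, Matrix.one_apply, ite_mul, one_mul, zero_mul]
      simp [Finset.sum_ite_eq, Matrix.trace, Matrix.diag]
    rw [h, hX₀tr, mul_zero]
  have hτ3 : (τ * (X₀ ⊗ₖ X₀ᴴ)).trace = 1 := by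
    rw [hτdef, aux_trace_tau_mul hd]
    have h : ∑ i, ∑ j, (X₀ ⊗ₖ X₀ᴴ) (j, j) (i, i) = (d : ℂ) := by
      have hterm : ∀ i j : Fin d, (X₀ ⊗ₖ X₀ᴴ) (j, j) (i, i)
          = if j = i then (Complex.normSq (X₀ i i) : ℂ) else 0 := by
        intro i j
        by_cases hji : j = i
        · subst hji
          simp only [Matrix.kroneckerMap_apply, Matrix.conjTranspose_apply, if_true]
          rw [Complex.star_def, Complex.mul_conj]
        · simp [Matrix.kroneckerMap_apply, hX₀off j i hji, hji]
      simp only [hterm]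
      simp [Finset.sum_ite_eq, hX₀diag]
    rw [h]
    field_simp
  -- unitarity of the Kronecker observables
  have hK1 : (X₀ ⊗ₖ (1 : Matrix (Fin d) (Fin d) ℂ))
      * (X₀ ⊗ₖ (1 : Matrix (Fin d) (Fin d) ℂ))ᴴ = 1 := by
    rw [aux_kron_conjTranspose, Matrix.conjTranspose_one, ← Matrix.mul_kronecker_mul, hX₀u,
      Matrix.mul_one, Matrix.one_kronecker_one]
  have hK2 : ((1 : Matrix (Fin d) (Fin d) ℂ) ⊗ₖ X₀)
      * ((1 : Matrix (Fin d) (Fin d) ℂ) ⊗ₖ X₀)ᴴ = 1 := by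
    rw [aux_kron_conjTranspose, Matrix.conjTranspose_one, ← Matrix.mul_kronecker_mul, hX₀u,
      Matrix.mul_one, Matrix.one_kronecker_one]
  have hK3 : (X₀ ⊗ₖ X₀ᴴ) * (X₀ ⊗ₖ X₀ᴴ)ᴴ = 1 := by
    rw [aux_kron_conjTranspose, Matrix.conjTranspose_conjTranspose,
      ← Matrix.mul_kronecker_mul, hX₀u, mul_eq_one_comm.mp hX₀u,
      Matrix.one_kronecker_one]
  -- marginals
  have hmA : (margA ρ).trace = 1 := by rw [aux_margA_trace, htr]
  have hmB : (margB ρ).trace = 1 := by rw [aux_margB_trace, htr]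
  have hmAh : (margA ρ).IsHermitian := aux_margA_herm hρ.isHermitian
  have hmBh : (margB ρ).IsHermitian := aux_margB_herm hρ.isHermitian
  set c : ℂ := (margA ρ * X₀).trace with hcdef
  set e : ℂ := (margB ρ * X₀).trace with hedef
  have hc : c = (Δ * (X₀ ⊗ₖ (1 : Matrix (Fin d) (Fin d) ℂ))).trace := by
    rw [hcdef, ← aux_trace_mul_kron_one, hρsplit, hτ1, zero_add]
  have he : e = (Δ * ((1 : Matrix (Fin d) (Fin d) ℂ) ⊗ₖ X₀)).trace := by
    rw [hedef, ← aux_trace_mul_one_kron, hρsplit, hτ2, zero_add]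
  have hcabs : ‖c‖ ≤ ε := by rw [hc]; exact hΔbound _ hK1
  have heabs : ‖e‖ ≤ ε := by rw [he]; exact hΔbound _ hK2
  set δ₀ : ℂ := (Δ * (X₀ ⊗ₖ X₀ᴴ)).trace with hδdef
  have hδabs : ‖δ₀‖ ≤ ε := hΔbound _ hK3
  -- scalars
  have hncc : Complex.normSq c ≤ ε * ε := by
    rw [← Complex.sq_norm, sq]
    exact mul_le_mul hcabs hcabs (norm_nonneg c) hεnn
  have hnce : Complex.normSq e ≤ ε * ε := by
    rw [← Complex.sq_norm, sq]
    exact mul_le_mul heabs heabs (norm_nonneg e) hεnn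
  have hc1 : Complex.normSq c < 1 := by nlinarith
  have he1 : Complex.normSq e < 1 := by nlinarith
  set a : ℝ := (Real.sqrt (1 - Complex.normSq c))⁻¹ with hadef
  set b : ℝ := (Real.sqrt (1 - Complex.normSq e))⁻¹ with hbdef
  have hcx : (0 : ℝ) < 1 - Complex.normSq c := by linarith
  have hex : (0 : ℝ) < 1 - Complex.normSq e := by linarith
  have hasq : (a ^ 2 * (1 - Complex.normSq c) : ℝ) = 1 := by
    rw [hadef, inv_pow, Real.sq_sqrt hcx.le]
    field_simp
  have hbsq : (b ^ 2 * (1 - Complex.normSq e) : ℝ) = 1 := by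
    rw [hbdef, inv_pow, Real.sq_sqrt hex.le]
    field_simp
  have ha2 : (a : ℂ) ^ 2 * (1 - (Complex.normSq c : ℂ)) = 1 := by exact_mod_cast hasq
  have hb2 : (b : ℂ) ^ 2 * (1 - (Complex.normSq e : ℂ)) = 1 := by exact_mod_cast hbsq
  have ha1 : 1 ≤ a := by
    rw [hadef]
    exact (one_le_inv₀ (Real.sqrt_pos.mpr hcx)).mpr
      (Real.sqrt_le_one.mpr (by nlinarith [Complex.normSq_nonneg c]))
  have hb1 : 1 ≤ b := by
    rw [hbdef]
    exact (one_le_inv₀ (Real.sqrt_pos.mpr hex)).mpr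
      (Real.sqrt_le_one.mpr (by nlinarith [Complex.normSq_nonneg e]))
  -- the witnesses
  set X : Matrix (Fin d) (Fin d) ℂ := (a : ℂ) • (X₀ - c • 1) with hXdef
  set Y : Matrix (Fin d) (Fin d) ℂ := (b : ℂ) • (X₀ - e • 1) with hYdef
  obtain ⟨con1, con3⟩ := aux_adjust (margA ρ) hmAh hmA X₀ hX₀u c rfl a ha2
  obtain ⟨con2, con4⟩ := aux_adjust (margB ρ) hmBh hmB X₀ hX₀u e rfl b hb2
  have hYH : Yᴴ = (b : ℂ) • (X₀ᴴ - (starRingEnd ℂ) e • 1) := by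
    rw [hYdef, Matrix.conjTranspose_smul, Matrix.conjTranspose_sub, Matrix.conjTranspose_smul,
      Matrix.conjTranspose_one]
    congr 1
    simp [Complex.star_def, Complex.conj_ofReal]
  have hkron : X ⊗ₖ Yᴴ = ((a : ℂ) * (b : ℂ)) •
      ((X₀ ⊗ₖ X₀ᴴ) - (starRingEnd ℂ) e • (X₀ ⊗ₖ (1 : Matrix (Fin d) (Fin d) ℂ))
        - c • ((1 : Matrix (Fin d) (Fin d) ℂ) ⊗ₖ X₀ᴴ)
        + (c * (starRingEnd ℂ) e) • ((1 : Matrix (Fin d) (Fin d) ℂ)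
            ⊗ₖ (1 : Matrix (Fin d) (Fin d) ℂ))) := by
    rw [hXdef, hYH, Matrix.smul_kronecker, Matrix.kronecker_smul, smul_smul]
    congr 1
    rw [aux_sub_kronecker, aux_kronecker_sub, aux_kronecker_sub, Matrix.smul_kronecker,
      Matrix.smul_kronecker, Matrix.kronecker_smul, Matrix.kronecker_smul, smul_smul]
    abel
  have hρ3 : (ρ * (X₀ ⊗ₖ X₀ᴴ)).trace = 1 + δ₀ := by rw [hρsplit, hτ3, hδdef]
  have hρ1 : (ρ * (X₀ ⊗ₖ (1 : Matrix (Fin d) (Fin d) ℂ))).trace = c := by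
    rw [hρsplit, hτ1, zero_add, hc]
  have hρ2 : (ρ * ((1 : Matrix (Fin d) (Fin d) ℂ) ⊗ₖ X₀ᴴ)).trace = (starRingEnd ℂ) e := by
    rw [aux_trace_mul_one_kron, aux_trace_mul_conjTranspose hmBh, hedef]
  have hval : (ρ * (X ⊗ₖ Yᴴ)).trace
      = (a : ℂ) * (b : ℂ) * (1 + δ₀ - c * (starRingEnd ℂ) e) := by
    rw [hkron, Matrix.mul_smul, Matrix.trace_smul, smul_eq_mul]
    congr 1
    rw [Matrix.mul_add, Matrix.mul_sub, Matrix.mul_sub, Matrix.mul_smul, Matrix.mul_smul,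
      Matrix.mul_smul, Matrix.trace_add, Matrix.trace_sub, Matrix.trace_sub,
      Matrix.trace_smul, Matrix.trace_smul, Matrix.trace_smul, Matrix.one_kronecker_one,
      Matrix.mul_one, htr, hρ3, hρ1, hρ2]
    simp only [smul_eq_mul, mul_one]
    ring
  set r : ℝ := ‖(ρ * (X ⊗ₖ Yᴴ)).trace‖ with hrdef
  have hrval : r = a * b * ‖1 + δ₀ - c * (starRingEnd ℂ) e‖ := by
    rw [hrdef, hval, norm_mul, norm_mul, Complex.norm_real, Complex.norm_real, Real.norm_eq_abs,
        Real.norm_eq_abs,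
      abs_of_nonneg (by linarith : (0:ℝ) ≤ a), abs_of_nonneg (by linarith : (0:ℝ) ≤ b)]
  have hwlow : 1 - ε - ε * ε ≤ ‖1 + δ₀ - c * (starRingEnd ℂ) e‖ := by
    have h1 : ‖δ₀ - c * (starRingEnd ℂ) e‖ ≤ ε + ε * ε := by
      have h1a : ‖δ₀ - c * (starRingEnd ℂ) e‖
          ≤ ‖δ₀‖ + ‖c * (starRingEnd ℂ) e‖ := by
        rw [sub_eq_add_neg]
        refine (norm_add_le _ _).trans ?_
        rw [norm_neg]
      have h1b : ‖c * (starRingEnd ℂ) e‖ = ‖c‖ * ‖e‖ := by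
        rw [norm_mul, Complex.norm_conj]
      rw [h1b] at h1a
      have h1c : ‖c‖ * ‖e‖ ≤ ε * ε :=
        mul_le_mul hcabs heabs (norm_nonneg e) hεnn
      linarith
    have h2 : ‖(1 : ℂ)‖ ≤ ‖1 + δ₀ - c * (starRingEnd ℂ) e‖
        + ‖δ₀ - c * (starRingEnd ℂ) e‖ := by
      have := norm_add_le (1 + δ₀ - c * (starRingEnd ℂ) e)
        (-(δ₀ - c * (starRingEnd ℂ) e))
      rw [norm_neg] at this
      refine le_trans (le_of_eq ?_) this
      congr 1
      ring
    rw [norm_one] at h2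
    linarith
  have hmem : r ∈ { s : ℝ | ∃ (X : Matrix (Fin d) (Fin d) ℂ) (Y : Matrix (Fin d) (Fin d) ℂ),
      (margA ρ * X).trace = 0 ∧ (margB ρ * Y).trace = 0 ∧
      (margA ρ * X * Xᴴ).trace = 1 ∧ (margB ρ * Y * Yᴴ).trace = 1 ∧
      s = ‖(ρ * (X ⊗ₖ Yᴴ)).trace‖ } :=
    ⟨X, Y, con1, con2, con3, con4, hrdef⟩
  have hle : r ≤ mu ρ := by
    unfold mu
    exact le_csSup ⟨1, fun s hs => aux_mem_le_one hρ s hs⟩ hmem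
  have hnn : (0:ℝ) ≤ 1 - ε - ε * ε := by clear * - hε hεnn; nlinarith
  have hab : (1:ℝ) ≤ a * b := by clear * - ha1 hb1; nlinarith
  have hr1 : 1 - ε - ε * ε ≤ r := by
    rw [hrval]
    calc 1 - ε - ε * ε ≤ (a * b) * (1 - ε - ε * ε) := le_mul_of_one_le_left hnn hab
      _ ≤ a * b * ‖1 + δ₀ - c * (starRingEnd ℂ) e‖ :=
        mul_le_mul_of_nonneg_left hwlow (by clear * - ha1 hb1; nlinarith)
  have h9 : 1 - 9 * ε ≤ 1 - ε - ε * ε := by clear * - hε hεnn; nlinarith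
  clear * - hle hr1 h9
  linarith

end
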